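/- arXiv:1806.06899 — 6 statements merged into one kernel-verified Lean document; each statement's English description precedes it below -/
import Mathlib

section
/- Let (W,R) be a Euclidean frame (∀x y z, xRy ∧ xRz → yRz). If W contains an irreflexive point x (¬xRx) with a successor (∃y, xRy), then the skeleton of (W, R*) contains a chain of 2 elements; moreover every chain in the skeleton of a Euclidean frame has at most 2 elements (i.e., the height of the frame is at most 2). -/
/-- Cluster lemma: in a Euclidean frame, if `R x y` then every point reachable
from `y` is related back and forth with `y`. -/
lemma euclid_cluster {W : Type*} {R : W → W → Prop}
    (heucl : ∀ x y z, R x y → R x z → R y z) {x y : W} (hxy : R x y)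
    {v : W} (h : Relation.ReflTransGen R y v) : R y v ∧ R v y := by
  induction h with
  | refl => exact ⟨heucl x y y hxy hxy, heucl x y y hxy hxy⟩
  | tail h step ih =>
      exact ⟨heucl _ _ _ ih.2 step, heucl _ _ _ step ih.2⟩

/-- In a Euclidean frame: an irreflexive point with a successor yields a chain of 2
elements in the skeleton, and every chain in the skeleton has at most 2 elements. -/
theorem stmt3 {W : Type*} (R : W → W → Prop)
    (heucl : ∀ x y z, R x y → R x z → R y z) :
    (∀ x : W, ¬ R x x → (∃ y, R x y) →
      ∃ a b : W, Relation.ReflTransGen R a b ∧ ¬ Relation.ReflTransGen R b a) ∧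
    (∀ a b c : W, Relation.ReflTransGen R a b → ¬ Relation.ReflTransGen R b a →
      Relation.ReflTransGen R b c → ¬ Relation.ReflTransGen R c b → False) := by
  constructor
  · rintro x hirr ⟨y, hxy⟩
    refine ⟨x, y, Relation.ReflTransGen.single hxy, fun h => ?_⟩
    have := euclid_cluster heucl hxy h
    exact hirr (heucl y x x this.1 this.1)
  · intro a b c hab hnba hbc hncb
    rcases (Relation.ReflTransGen.cases_head hab) with rfl | ⟨a', haa', ha'b⟩
    · exact hnba Relation.ReflTransGen.refl
    · have hb := euclid_cluster heucl haa' ha'b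
      have hc := euclid_cluster heucl haa' (ha'b.trans hbc)
      exact hncb (Relation.ReflTransGen.head hc.2 (Relation.ReflTransGen.single hb.1))
end

section
/- Let (W,R) be a frame in which every nonempty subset of every R*-cone has a maximal element (e.g., W finite). Then for every natural number h ≥ 1 and every point x whose depth exceeds h, there exists y with x R* y such that the depth of y equals h. (The frame is top-heavy.) -/
/-- `depthGE R x n`: the depth of `x` is at least `n`, i.e. there is a chain of `n`
elements `x = f 0, f 1, ..., f (n-1)` with `f i R* f (i+1)` and `¬ f (i+1) R* f i`. -/
def depthGE {W : Type*} (R : W → W → Prop) (x : W) (n : ℕ) : Prop :=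
  ∃ f : ℕ → W, f 0 = x ∧ ∀ i, i + 1 < n →
    Relation.ReflTransGen R (f i) (f (i + 1)) ∧ ¬ Relation.ReflTransGen R (f (i + 1)) (f i)

/-- Top-heaviness: if every nonempty subset of every cone has a maximal element,
then every point of depth `> h` (`h ≥ 1`) sees a point of depth exactly `h`. -/
theorem stmt7 {W : Type*} (R : W → W → Prop)
    (hmax : ∀ x : W, ∀ S : Set W, S ⊆ {y | Relation.ReflTransGen R x y} → S.Nonempty →
      ∃ y ∈ S, ∀ z ∈ S, Relation.ReflTransGen R y z → Relation.ReflTransGen R z y)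
    (h : ℕ) (hh : 1 ≤ h) (x : W) (hx : depthGE R x (h + 1)) :
    ∃ y, Relation.ReflTransGen R x y ∧ depthGE R y h ∧ ¬ depthGE R y (h + 1) := by
  classical
  set S : Set W := {y | Relation.ReflTransGen R x y ∧ depthGE R y h} with hS
  have hsub : S ⊆ {y | Relation.ReflTransGen R x y} := fun y hy => hy.1
  obtain ⟨f, hf0, hf⟩ := hx
  have hxf1 : Relation.ReflTransGen R x (f 1) := by
    have := hf 0 (by omega)
    rw [hf0] at this
    exact this.1
  have hne : S.Nonempty := by
    refine ⟨f 1, hxf1, fun i => f (i + 1), rfl, fun i hi => ?_⟩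
    exact hf (i + 1) (by omega)
  obtain ⟨y, ⟨hxy, hyd⟩, hmaxy⟩ := hmax x S hsub hne
  refine ⟨y, hxy, hyd, ?_⟩
  rintro ⟨g, hg0, hg⟩
  have h01 := hg 0 (by omega)
  rw [hg0] at h01
  have hg1S : g 1 ∈ S := by
    refine ⟨hxy.trans h01.1, fun i => g (i + 1), rfl, fun i hi => ?_⟩
    exact hg (i + 1) (by omega)
  exact h01.2 (hmaxy (g 1) hg1S h01.1)
end

section
/- For a preorder (W,R) and h ≥ 1, the frame (W,R) validates the Segerberg height formula B_h (defined by B_0 = ⊥, B_{i+1} = p_{i+1} → □(◇p_{i+1} ∨ B_i)) under all valuations if and only if the height of (W,R) is at most h. -/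
inductive Formula : Type where
  | var : ℕ → Formula
  | bot : Formula
  | imp : Formula → Formula → Formula
  | dia : Formula → Formula

def Formula.neg (φ : Formula) : Formula := .imp φ .bot
def Formula.box (φ : Formula) : Formula := Formula.neg (.dia (Formula.neg φ))
def Formula.or (φ ψ : Formula) : Formula := .imp (Formula.neg φ) ψ
def Formula.and (φ ψ : Formula) : Formula := Formula.neg (.imp φ (Formula.neg ψ))

/-- Kripke semantics. -/
def Sat {W : Type*} (R : W → W → Prop) (V : ℕ → W → Prop) : W → Formula → Prop
  | x, .var n => V n x
  | _, .bot => False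
  | x, .imp φ ψ => Sat R V x φ → Sat R V x ψ
  | x, .dia φ => ∃ y, R x y ∧ Sat R V y φ

/-- Segerberg's height formulas: `B 0 = ⊥`, `B (i+1) = p_{i+1} → □(◇p_{i+1} ∨ B i)`. -/
def B : ℕ → Formula
  | 0 => Formula.bot
  | i + 1 => Formula.imp (.var (i + 1))
      (Formula.box (Formula.or (Formula.dia (.var (i + 1))) (B i)))

open Classical in
/-- If `B i` fails at `x`, there is a strict chain of `i+1` points starting at `x`. -/
lemma chain_of_not_sat {W : Type*} (R : W → W → Prop) (V : ℕ → W → Prop) :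
    ∀ i, ∀ x : W, ¬ Sat R V x (B i) →
      ∃ f : ℕ → W, f 0 = x ∧ ∀ j, j < i → R (f j) (f (j + 1)) ∧ ¬ R (f (j + 1)) (f j) := by
  intro i
  induction i with
  | zero =>
      intro x _
      exact ⟨fun _ => x, rfl, fun j hj => absurd hj (Nat.not_lt_zero _)⟩
  | succ i ih =>
      intro x hx
      have h1 : V (i + 1) x ∧ ¬ Sat R V x ((Formula.dia (.var (i+1))).or (B i)).box := by
        have := _root_.not_imp.mp hx
        exact this
      obtain ⟨hvx, hbox⟩ := h1
      have h2 : ∃ y, R x y ∧ ¬ Sat R V y ((Formula.dia (.var (i+1))).or (B i)) := by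
        have := not_not.mp hbox
        obtain ⟨y, hy1, hy2⟩ := this
        exact ⟨y, hy1, hy2⟩
      obtain ⟨y, hxy, hor⟩ := h2
      have h3 : ¬ Sat R V y (Formula.dia (.var (i+1))) ∧ ¬ Sat R V y (B i) := _root_.not_imp.mp hor
      obtain ⟨hnd, hnb⟩ := h3
      have hnyx : ¬ R y x := fun hyx => hnd ⟨x, hyx, hvx⟩
      obtain ⟨g, hg0, hg⟩ := ih y hnb
      refine ⟨fun n => match n with | 0 => x | k + 1 => g k, rfl, ?_⟩
      intro j hj
      match j with
      | 0 => simpa [hg0] using ⟨hxy, hnyx⟩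
      | k + 1 => exact hg k (by omega)

/-- Given a strict chain of `h+1` points, `B h` fails at the bottom under the canonical valuation. -/
lemma not_sat_of_chain {W : Type*} (R : W → W → Prop)
    (hrefl : Reflexive R) (htrans : Transitive R) (h : ℕ) (f : ℕ → W)
    (hf : ∀ i, i < h → R (f i) (f (i + 1)) ∧ ¬ R (f (i + 1)) (f i)) :
    ∀ i, i ≤ h → ¬ Sat R (fun n w => R w (f (h - n))) (f (h - i)) (B i) := by
  intro i
  induction i with
  | zero => intro _ hs; exact hs
  | succ i ih =>
      intro hih hs
      have e : h - (i + 1) + 1 = h - i := by omega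
      have hlt : h - (i + 1) < h := by omega
      have hstep := hf (h - (i + 1)) hlt
      rw [e] at hstep
      have h2 := hs (hrefl _)
      apply h2
      refine ⟨f (h - i), hstep.1, ?_⟩
      intro hor
      have hnd : ¬ Sat R (fun n w => R w (f (h - n))) (f (h - i))
          (Formula.dia (.var (i+1))) := by
        rintro ⟨z, hz1, hz2⟩
        exact hstep.2 (htrans hz1 hz2)
      exact ih (by omega) (hor hnd)

/-- For a preorder `(W,R)` and `h ≥ 1`: `B h` is valid on `(W,R)` iff the height
of `(W,R)` is at most `h` (no chain of `h+1` elements in the skeleton). -/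
theorem stmt9 {W : Type*} (R : W → W → Prop)
    (hrefl : Reflexive R) (htrans : Transitive R) (h : ℕ) (hh : 1 ≤ h) :
    (∀ (V : ℕ → W → Prop) (x : W), Sat R V x (B h)) ↔
      ¬ ∃ f : ℕ → W, ∀ i, i < h → R (f i) (f (i + 1)) ∧ ¬ R (f (i + 1)) (f i) := by
  constructor
  · intro hval
    rintro ⟨f, hf⟩
    exact not_sat_of_chain R hrefl htrans h f hf h le_rfl
      (by simpa using hval (fun n w => R w (f (h - n))) (f (h - h)))
  · intro hno V x
    by_contra hx
    obtain ⟨f, -, hf⟩ := chain_of_not_sat R V h x hx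
    exact hno ⟨f, hf⟩
end

section
/- Semantic Glivenko for height 1 (fmp direction): Let (W,R) be a finite frame with R a preorder, and φ a modal formula. If ◇□φ is refuted at some point of some model on (W,R), then there is a maximal cluster C of (W,R) such that the restricted frame (C, R∩C²), which is of height 1 (R∩C² is an equivalence relation on C), refutes φ. -/
lemma sat_restrict {W : Type*} (R : W → W → Prop) (V : ℕ → W → Prop) (C : Set W)
    (hC : ∀ a ∈ C, ∀ y, R a y → y ∈ C) :
    ∀ (ψ : Formula) (z : C),
      (Sat (fun a b : C => R a b) (fun n (a : C) => V n a) z ψ ↔ Sat R V z ψ) := by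
  intro ψ
  induction ψ with
  | var n => intro z; simp [Sat]
  | bot => intro z; simp [Sat]
  | imp φ ψ ih1 ih2 => intro z; simp only [Sat, ih1, ih2]
  | dia φ ih =>
    intro z
    constructor
    · rintro ⟨y, hy, h⟩
      exact ⟨y, hy, (ih y).mp h⟩
    · rintro ⟨y, hy, h⟩
      exact ⟨⟨y, hC z z.2 y hy⟩, hy, (ih _).mpr h⟩

/-- Semantic Glivenko for height 1 (fmp direction): if `◇□φ` is refuted on a finite
preorder `(W,R)`, then some maximal cluster `C` (on which `R` restricts to a total
equivalence, so the restricted frame has height 1) refutes `φ`. -/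
theorem stmt10 {W : Type*} [Fintype W] (R : W → W → Prop)
    (hrefl : Reflexive R) (htrans : Transitive R) (φ : Formula)
    (href : ∃ (V : ℕ → W → Prop) (x : W), ¬ Sat R V x (Formula.dia (Formula.box φ))) :
    ∃ C : Set W, C.Nonempty ∧
      (∀ a ∈ C, ∀ y : W, R a y → y ∈ C) ∧
      (∀ a ∈ C, ∀ b ∈ C, R a b) ∧
      ∃ (V : ℕ → C → Prop) (x : C), ¬ Sat (fun a b : C => R a b) V x φ := by
  obtain ⟨V, x, hx⟩ := href
  -- unfold the refutation
  have hx' : ∀ y, R x y → ∃ z, R y z ∧ ¬ Sat R V z φ := by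
    intro y hy
    by_contra h
    push_neg at h
    apply hx
    refine ⟨y, hy, ?_⟩
    rintro ⟨z, hz, hz2⟩
    exact hz2 (h z hz)
  -- find a maximal point above x
  classical
  let s : W → W → Prop := fun a b => R b a ∧ ¬ R a b
  have hirr : IsIrrefl W s := ⟨fun a ⟨h1, h2⟩ => h2 h1⟩
  have htr : IsTrans W s := ⟨fun a b c ⟨h1, h2⟩ ⟨h3, h4⟩ =>
    ⟨htrans h3 h1, fun h => h4 (htrans h1 h)⟩⟩
  have hwf : WellFounded s := Finite.wellFounded_of_trans_of_irrefl s
  obtain ⟨m, hm, hmax⟩ := hwf.has_min {y | R x y} ⟨x, hrefl x⟩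
  have hmaxm : ∀ y, R m y → R y m := by
    intro y hy
    by_contra h
    exact hmax y (htrans hm hy) ⟨hy, h⟩
  refine ⟨{y | R m y}, ⟨m, hrefl m⟩, ?_, ?_, ?_⟩
  · intro a ha y hy; exact htrans ha hy
  · intro a ha b hb; exact htrans (hmaxm a ha) hb
  · obtain ⟨z, hz, hz2⟩ := hx' m hm
    refine ⟨fun n (a : ({y | R m y} : Set W)) => V n a, ⟨z, hz⟩, ?_⟩
    intro h
    exact hz2 ((sat_restrict R V _ (fun a ha y hy => htrans ha hy) φ ⟨z, hz⟩).mp h)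
end

section
/- If (W,R) is an S4-frame (R a preorder) in which every point sees a point of depth 1 (∀x ∃y, xRy ∧ ∀z, yRz → zRy), then for every modal formula φ: ◇□φ is valid on (W,R) if and only if φ is valid on the subframe of points of depth 1. -/
/-- Depth-1 points are closed under R. -/
lemma depth1_closed {W : Type*} {R : W → W → Prop} (htrans : Transitive R)
    {x y : W} (hx : ∀ z, R x z → R z x) (hxy : R x y) : ∀ z, R y z → R z y := by
  intro z hyz
  exact htrans (hx z (htrans hxy hyz)) hxy

/-- Transfer lemma between the full frame and the depth-1 subframe. -/
lemma sat_transfer {W : Type*} {R : W → W → Prop} (htrans : Transitive R)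
    (φ : Formula) (V : ℕ → W → Prop) (x : {y : W // ∀ z, R y z → R z y}) :
    Sat R V x.val φ ↔
      Sat (fun a b : {y : W // ∀ z, R y z → R z y} => R a b)
        (fun n p => V n p.val) x φ := by
  induction φ generalizing x with
  | var n => rfl
  | bot => rfl
  | imp φ ψ ihφ ihψ =>
      simp only [Sat]
      exact imp_congr (ihφ x) (ihψ x)
  | dia φ ih =>
      constructor
      · rintro ⟨y, hxy, hy⟩
        exact ⟨⟨y, depth1_closed htrans x.2 hxy⟩, hxy, (ih _).mp hy⟩
      · rintro ⟨y, hxy, hy⟩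
        exact ⟨y.val, hxy, (ih _).mpr hy⟩

/-- If `(W,R)` is a preorder in which every point sees a depth-1 point, then `◇□φ`
is valid on `(W,R)` iff `φ` is valid on the subframe of depth-1 points. -/
theorem stmt12 {W : Type*} (R : W → W → Prop)
    (hrefl : Reflexive R) (htrans : Transitive R)
    (hsee : ∀ x : W, ∃ y, R x y ∧ ∀ z, R y z → R z y) (φ : Formula) :
    (∀ (V : ℕ → W → Prop) (x : W), Sat R V x (Formula.dia (Formula.box φ))) ↔
      (∀ (V : ℕ → {y : W // ∀ z, R y z → R z y} → Prop)
        (x : {y : W // ∀ z, R y z → R z y}),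
        Sat (fun a b : {y : W // ∀ z, R y z → R z y} => R a b) V x φ) := by
  constructor
  · intro h V' x
    set V : ℕ → W → Prop := fun n w => ∃ h : ∀ z, R w z → R z w, V' n ⟨w, h⟩ with hV
    obtain ⟨y, hxy, hbox⟩ := h V x.val
    -- box φ at y : ¬ ∃ z, R y z ∧ ¬ Sat φ at z
    have hRyx : R y x.val := x.2 y hxy
    have hx : Sat R V x.val φ := by
      by_contra hc
      exact hbox ⟨x.val, hRyx, fun hs => (hc hs).elim⟩
    have := (sat_transfer htrans φ V x).mp hx
    have hVeq : (fun n (p : {y : W // ∀ z, R y z → R z y}) => V n p.val) = V' := by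
      funext n p
      simp only [hV]
      exact propext ⟨fun ⟨h, hv⟩ => by convert hv, fun hv => ⟨p.2, hv⟩⟩
    rwa [hVeq] at this
  · intro h V x
    obtain ⟨y, hxy, hy⟩ := hsee x
    refine ⟨y, hxy, ?_⟩
    rintro ⟨z, hyz, hz⟩
    have hzd : ∀ w, R z w → R w z := depth1_closed htrans hy hyz
    exact hz ((sat_transfer htrans φ V ⟨z, hzd⟩).mpr (h _ _))
end

section
/- If (W,R) is a frame and x ∈ W has depth ≤ h+1 but depth > h (i.e., depth exactly h+1), and y satisfies x R* y, ¬(y has depth ≤ h), and y has depth ≤ h+1, then x and y belong to the same cluster (x R* y and y R* x). -/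
/-- If `x` has depth exactly `h+1`, `x R* y`, and `y` has depth exactly `h+1`
(depth `> h` and `≤ h+1`), then `x` and `y` are in the same cluster. -/
theorem stmt17 {W : Type*} (R : W → W → Prop) (h : ℕ) (x y : W)
    (hx1 : depthGE R x (h + 1)) (hx2 : ¬ depthGE R x (h + 2))
    (hxy : Relation.ReflTransGen R x y)
    (hy1 : depthGE R y (h + 1)) (hy2 : ¬ depthGE R y (h + 2)) :
    Relation.ReflTransGen R x y ∧ Relation.ReflTransGen R y x := by
  refine ⟨hxy, ?_⟩
  by_contra hyx
  obtain ⟨f, hf0, hf⟩ := hy1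
  apply hx2
  refine ⟨fun i => match i with | 0 => x | (j+1) => f j, rfl, ?_⟩
  intro i hi
  match i with
  | 0 =>
    simp only [hf0]
    exact ⟨hxy, hyx⟩
  | (j+1) =>
    exact hf j (by omega)
end
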